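/- Let (u, p) be a smooth (C^∞) solution of the steady incompressible Euler equations on U with u₁ > 0 everywhere, and set β₂ = u₂/u₁, β₃ = u₃/u₁, ϖ = ∂₂β₂ + ∂₃β₃. Then (p, ϖ) satisfies the elliptic system: ϖ = (1/u₁²)∂₁p, and ∂₁ϖ + ∂₂((1/u₁²)∂₂p) + ∂₃((1/u₁²)∂₃p) − ∂₂((β₂/u₁²)∂₁p) − ∂₃((β₃/u₁²)∂₁p) + (β₂∂₂ + β₃∂₃)((1/u₁²)∂₁p) + (∂₂β₂)² + (∂₃β₃)² + 2∂₂β₃∂₃β₂ = 0 on U. -/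

import Mathlib

/-- Partial derivative in direction `i` of a scalar function on `ℝ³`. -/
noncomputable def pd (i : Fin 3) (f : (Fin 3 → ℝ) → ℝ) (x : Fin 3 → ℝ) : ℝ :=
  fderiv ℝ f x (Pi.single i 1)

open Filter Topology

lemma pd_congr {i : Fin 3} {f g : (Fin 3 → ℝ) → ℝ} {x} (h : f =ᶠ[nhds x] g) :
    pd i f x = pd i g x := by unfold pd; rw [h.fderiv_eq]

lemma pd_zero {i : Fin 3} {x} : pd i (fun _ => (0:ℝ)) x = 0 := by
  unfold pd; simp

lemma pd_add {i : Fin 3} {f g : (Fin 3 → ℝ) → ℝ} {x} (hf : DifferentiableAt ℝ f x)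
    (hg : DifferentiableAt ℝ g x) :
    pd i (fun y => f y + g y) x = pd i f x + pd i g x := by
  unfold pd; rw [fderiv_fun_add hf hg]; simp

lemma pd_sub {i : Fin 3} {f g : (Fin 3 → ℝ) → ℝ} {x} (hf : DifferentiableAt ℝ f x)
    (hg : DifferentiableAt ℝ g x) :
    pd i (fun y => f y - g y) x = pd i f x - pd i g x := by
  unfold pd; rw [fderiv_fun_sub hf hg]; simp

lemma pd_mul {i : Fin 3} {f g : (Fin 3 → ℝ) → ℝ} {x} (hf : DifferentiableAt ℝ f x)
    (hg : DifferentiableAt ℝ g x) :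
    pd i (fun y => f y * g y) x = pd i f x * g x + f x * pd i g x := by
  unfold pd; rw [fderiv_fun_mul hf hg]; simp; ring

lemma pd_comm {f : (Fin 3 → ℝ) → ℝ} {x} (hf : ContDiffAt ℝ 2 f x) (i j : Fin 3) :
    pd i (pd j f) x = pd j (pd i f) x := by
  have h := hf.isSymmSndFDerivAt (by simp [minSmoothness_of_isRCLikeNormedField])
  have hd : DifferentiableAt ℝ (fderiv ℝ f) x :=
    (hf.fderiv_right (m := 1) (by norm_num)).differentiableAt one_ne_zero
  have e : ∀ v w : Fin 3 → ℝ, fderiv ℝ (fun y => fderiv ℝ f y v) x w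
      = fderiv ℝ (fderiv ℝ f) x w v := by
    intro v w
    rw [fderiv_clm_apply hd (differentiableAt_const v)]
    simp
  show fderiv ℝ (fun y => fderiv ℝ f y (Pi.single j 1)) x (Pi.single i 1) = _
  rw [e, h]
  show _ = fderiv ℝ (fun y => fderiv ℝ f y (Pi.single i 1)) x (Pi.single j 1)
  rw [e]

lemma contDiffOn_pd {f : (Fin 3 → ℝ) → ℝ} {U : Set (Fin 3 → ℝ)} (hU : IsOpen U)
    (hf : ContDiffOn ℝ (⊤ : ℕ∞) f U) (i : Fin 3) : ContDiffOn ℝ (⊤ : ℕ∞) (pd i f) U :=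
  (hf.fderiv_of_isOpen hU (by simp)).clm_apply contDiffOn_const

/-- the elliptic system (5.6) for `(p, ϖ)` with
`ϖ = ∂₂β₂ + ∂₃β₃`, for a smooth incompressible Euler flow with `u₁ > 0`. -/
theorem incompressible_elliptic_system
    (U : Set (Fin 3 → ℝ)) (hU : IsOpen U)
    (u : Fin 3 → (Fin 3 → ℝ) → ℝ) (p : (Fin 3 → ℝ) → ℝ)
    (hu : ∀ i, ContDiffOn ℝ (⊤ : ℕ∞) (u i) U) (hp : ContDiffOn ℝ (⊤ : ℕ∞) p U)
    (hu1pos : ∀ x ∈ U, 0 < u 0 x)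
    (hdiv : ∀ x ∈ U, pd 0 (u 0) x + pd 1 (u 1) x + pd 2 (u 2) x = 0)
    (hmom : ∀ i : Fin 3, ∀ x ∈ U,
      u 0 x * pd 0 (u i) x + u 1 x * pd 1 (u i) x + u 2 x * pd 2 (u i) x
        + pd i p x = 0)
    (β₂ β₃ ϖ : (Fin 3 → ℝ) → ℝ)
    (hβ₂ : β₂ = fun y => u 1 y / u 0 y) (hβ₃ : β₃ = fun y => u 2 y / u 0 y)
    (hϖ : ϖ = fun y => pd 1 β₂ y + pd 2 β₃ y) :
    ∀ x ∈ U,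
      (ϖ x = 1 / (u 0 x) ^ 2 * pd 0 p x) ∧
      (pd 0 ϖ x + pd 1 (fun y => 1 / (u 0 y) ^ 2 * pd 1 p y) x
          + pd 2 (fun y => 1 / (u 0 y) ^ 2 * pd 2 p y) x
          - pd 1 (fun y => β₂ y / (u 0 y) ^ 2 * pd 0 p y) x
          - pd 2 (fun y => β₃ y / (u 0 y) ^ 2 * pd 0 p y) x
          + (β₂ x * pd 1 (fun y => 1 / (u 0 y) ^ 2 * pd 0 p y) x
            + β₃ x * pd 2 (fun y => 1 / (u 0 y) ^ 2 * pd 0 p y) x)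
          + (pd 1 β₂ x) ^ 2 + (pd 2 β₃ x) ^ 2 + 2 * pd 1 β₃ x * pd 2 β₂ x = 0) := by
  have hu0ne : ∀ y ∈ U, u 0 y ≠ 0 := fun y hy => ne_of_gt (hu1pos y hy)
  have cβ₂ : ContDiffOn ℝ (⊤ : ℕ∞) β₂ U := hβ₂ ▸ ((hu 1).div (hu 0) hu0ne)
  have cβ₃ : ContDiffOn ℝ (⊤ : ℕ∞) β₃ U := hβ₃ ▸ ((hu 2).div (hu 0) hu0ne)
  -- generic: smooth on U implies differentiable at points of U
  have cd : ∀ {f : (Fin 3 → ℝ) → ℝ}, ContDiffOn ℝ (⊤ : ℕ∞) f U → ∀ y ∈ U,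
      DifferentiableAt ℝ f y := fun h y hy =>
    ((h y hy).contDiffAt (hU.mem_nhds hy)).differentiableAt (by simp)
  -- recover derivatives of u1, u2 from β's
  have hrec2 : ∀ y ∈ U, ∀ j, pd j (u 1) y = pd j β₂ y * u 0 y + β₂ y * pd j (u 0) y := by
    intro y hy j
    have hev : u 1 =ᶠ[nhds y] fun z => β₂ z * u 0 z := by
      filter_upwards [hU.mem_nhds hy] with z hz
      rw [hβ₂]
      exact (div_mul_cancel₀ _ (hu0ne z hz)).symm
    rw [pd_congr hev, pd_mul (cd cβ₂ y hy) (cd (hu 0) y hy)]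
  have hrec3 : ∀ y ∈ U, ∀ j, pd j (u 2) y = pd j β₃ y * u 0 y + β₃ y * pd j (u 0) y := by
    intro y hy j
    have hev : u 2 =ᶠ[nhds y] fun z => β₃ z * u 0 z := by
      filter_upwards [hU.mem_nhds hy] with z hz
      rw [hβ₃]
      exact (div_mul_cancel₀ _ (hu0ne z hz)).symm
    rw [pd_congr hev, pd_mul (cd cβ₃ y hy) (cd (hu 0) y hy)]
  -- first identity, on all of U
  have hfirst : ∀ y ∈ U, ϖ y = 1 / (u 0 y) ^ 2 * pd 0 p y := by
    intro y hy
    have hne := hu0ne y hy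
    have e1 := hrec2 y hy 1
    have e2 := hrec3 y hy 2
    have hb2 : β₂ y = u 1 y / u 0 y := by rw [hβ₂]
    have hb3 : β₃ y = u 2 y / u 0 y := by rw [hβ₃]
    have hd := hdiv y hy
    have hm0 := hmom 0 y hy
    rw [hϖ]
    simp only
    rw [hb2] at e1
    rw [hb3] at e2
    field_simp at e1 e2 ⊢
    linear_combination -e1 - e2 + u 0 y * hd - hm0
  -- the transported momentum equations for β₂ and β₃ vanish on U
  have hF : ∀ y ∈ U, pd 0 β₂ y + β₂ y * pd 1 β₂ y + β₃ y * pd 2 β₂ y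
      + 1 / (u 0 y) ^ 2 * pd 1 p y - β₂ y / (u 0 y) ^ 2 * pd 0 p y = 0 := by
    intro y hy
    have hne := hu0ne y hy
    have e0 := hrec2 y hy 0
    have e1 := hrec2 y hy 1
    have e2 := hrec2 y hy 2
    have hb2 : β₂ y = u 1 y / u 0 y := by rw [hβ₂]
    have hb3 : β₃ y = u 2 y / u 0 y := by rw [hβ₃]
    have hb2' : u 1 y = β₂ y * u 0 y := by
      rw [hb2]; exact (div_mul_cancel₀ _ hne).symm
    have hm0 := hmom 0 y hy
    have hm1 := hmom 1 y hy
    rw [hb2, hb3]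
    field_simp
    linear_combination u 0 y * hm1 - (u 0 y) ^ 2 * e0 - u 0 y * u 1 y * e1
      - u 0 y * u 2 y * e2 - β₂ y * u 0 y * hm0 - pd 0 p y * hb2'
  have hG : ∀ y ∈ U, pd 0 β₃ y + β₂ y * pd 1 β₃ y + β₃ y * pd 2 β₃ y
      + 1 / (u 0 y) ^ 2 * pd 2 p y - β₃ y / (u 0 y) ^ 2 * pd 0 p y = 0 := by
    intro y hy
    have hne := hu0ne y hy
    have e0 := hrec3 y hy 0
    have e1 := hrec3 y hy 1
    have e2 := hrec3 y hy 2
    have hb2 : β₂ y = u 1 y / u 0 y := by rw [hβ₂]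
    have hb3 : β₃ y = u 2 y / u 0 y := by rw [hβ₃]
    have hb3' : u 2 y = β₃ y * u 0 y := by
      rw [hb3]; exact (div_mul_cancel₀ _ hne).symm
    have hm0 := hmom 0 y hy
    have hm2 := hmom 2 y hy
    rw [hb2, hb3]
    field_simp
    linear_combination u 0 y * hm2 - (u 0 y) ^ 2 * e0 - u 0 y * u 1 y * e1
      - u 0 y * u 2 y * e2 - β₃ y * u 0 y * hm0 - pd 0 p y * hb3'
  intro x hx
  have hUx : U ∈ nhds x := hU.mem_nhds hx
  refine ⟨hfirst x hx, ?_⟩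
  -- smoothness of the various building blocks
  have cq : ContDiffOn ℝ (⊤ : ℕ∞) (fun y => 1 / (u 0 y) ^ 2) U :=
    contDiffOn_const.div ((hu 0).pow 2) (fun y hy => pow_ne_zero 2 (hu0ne y hy))
  have cD1 : ContDiffOn ℝ (⊤ : ℕ∞) (fun y => 1 / (u 0 y) ^ 2 * pd 1 p y) U :=
    cq.mul (contDiffOn_pd hU hp 1)
  have cD2 : ContDiffOn ℝ (⊤ : ℕ∞) (fun y => 1 / (u 0 y) ^ 2 * pd 2 p y) U :=
    cq.mul (contDiffOn_pd hU hp 2)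
  have cE1 : ContDiffOn ℝ (⊤ : ℕ∞) (fun y => β₂ y / (u 0 y) ^ 2 * pd 0 p y) U :=
    (cβ₂.div ((hu 0).pow 2) (fun y hy => pow_ne_zero 2 (hu0ne y hy))).mul
      (contDiffOn_pd hU hp 0)
  have cE2 : ContDiffOn ℝ (⊤ : ℕ∞) (fun y => β₃ y / (u 0 y) ^ 2 * pd 0 p y) U :=
    (cβ₃.div ((hu 0).pow 2) (fun y hy => pow_ne_zero 2 (hu0ne y hy))).mul
      (contDiffOn_pd hU hp 0)
  have dβ₂ := cd cβ₂ x hx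
  have dβ₃ := cd cβ₃ x hx
  have d0β₂ := cd (contDiffOn_pd hU cβ₂ 0) x hx
  have d1β₂ := cd (contDiffOn_pd hU cβ₂ 1) x hx
  have d2β₂ := cd (contDiffOn_pd hU cβ₂ 2) x hx
  have d0β₃ := cd (contDiffOn_pd hU cβ₃ 0) x hx
  have d1β₃ := cd (contDiffOn_pd hU cβ₃ 1) x hx
  have d2β₃ := cd (contDiffOn_pd hU cβ₃ 2) x hx
  have dD1 := cd cD1 x hx
  have dD2 := cd cD2 x hx
  have dE1 := cd cE1 x hx
  have dE2 := cd cE2 x hx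
  -- expansion of pd 1 F x = 0
  have hF0 : pd 1 (fun y => pd 0 β₂ y + β₂ y * pd 1 β₂ y + β₃ y * pd 2 β₂ y
      + 1 / (u 0 y) ^ 2 * pd 1 p y - β₂ y / (u 0 y) ^ 2 * pd 0 p y) x = 0 := by
    have hev : (fun y => pd 0 β₂ y + β₂ y * pd 1 β₂ y + β₃ y * pd 2 β₂ y
        + 1 / (u 0 y) ^ 2 * pd 1 p y - β₂ y / (u 0 y) ^ 2 * pd 0 p y)
        =ᶠ[nhds x] (fun _ => (0:ℝ)) := by
      filter_upwards [hUx] with z hz using hF z hz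
    rw [pd_congr hev, pd_zero]
  have hG0 : pd 2 (fun y => pd 0 β₃ y + β₂ y * pd 1 β₃ y + β₃ y * pd 2 β₃ y
      + 1 / (u 0 y) ^ 2 * pd 2 p y - β₃ y / (u 0 y) ^ 2 * pd 0 p y) x = 0 := by
    have hev : (fun y => pd 0 β₃ y + β₂ y * pd 1 β₃ y + β₃ y * pd 2 β₃ y
        + 1 / (u 0 y) ^ 2 * pd 2 p y - β₃ y / (u 0 y) ^ 2 * pd 0 p y)
        =ᶠ[nhds x] (fun _ => (0:ℝ)) := by
      filter_upwards [hUx] with z hz using hG z hz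
    rw [pd_congr hev, pd_zero]
  rw [pd_sub (((d0β₂.fun_add (dβ₂.fun_mul d1β₂)).fun_add (dβ₃.fun_mul d2β₂)).fun_add dD1) dE1,
      pd_add ((d0β₂.fun_add (dβ₂.fun_mul d1β₂)).fun_add (dβ₃.fun_mul d2β₂)) dD1,
      pd_add (d0β₂.fun_add (dβ₂.fun_mul d1β₂)) (dβ₃.fun_mul d2β₂),
      pd_add d0β₂ (dβ₂.fun_mul d1β₂),
      pd_mul dβ₂ d1β₂, pd_mul dβ₃ d2β₂] at hF0
  rw [pd_sub (((d0β₃.fun_add (dβ₂.fun_mul d1β₃)).fun_add (dβ₃.fun_mul d2β₃)).fun_add dD2) dE2,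
      pd_add ((d0β₃.fun_add (dβ₂.fun_mul d1β₃)).fun_add (dβ₃.fun_mul d2β₃)) dD2,
      pd_add (d0β₃.fun_add (dβ₂.fun_mul d1β₃)) (dβ₃.fun_mul d2β₃),
      pd_add d0β₃ (dβ₂.fun_mul d1β₃),
      pd_mul dβ₂ d1β₃, pd_mul dβ₃ d2β₃] at hG0
  -- rewrite pd 0 ϖ, and pd j (1/u0² ∂₀p)
  have hϖev : (fun y => 1 / (u 0 y) ^ 2 * pd 0 p y) =ᶠ[nhds x] ϖ := by
    filter_upwards [hUx] with z hz using (hfirst z hz).symm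
  have hw1 : pd 1 (fun y => 1 / (u 0 y) ^ 2 * pd 0 p y) x
      = pd 1 (pd 1 β₂) x + pd 1 (pd 2 β₃) x := by
    rw [pd_congr hϖev, hϖ, pd_add d1β₂ d2β₃]
  have hw2 : pd 2 (fun y => 1 / (u 0 y) ^ 2 * pd 0 p y) x
      = pd 2 (pd 1 β₂) x + pd 2 (pd 2 β₃) x := by
    rw [pd_congr hϖev, hϖ, pd_add d1β₂ d2β₃]
  have hw0 : pd 0 ϖ x = pd 0 (pd 1 β₂) x + pd 0 (pd 2 β₃) x := by
    rw [hϖ, pd_add d1β₂ d2β₃]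
  -- symmetry of second derivatives
  have c2β₂ : ContDiffAt ℝ 2 β₂ x := ((cβ₂ x hx).contDiffAt hUx).of_le (WithTop.coe_le_coe.mpr le_top)
  have c2β₃ : ContDiffAt ℝ 2 β₃ x := ((cβ₃ x hx).contDiffAt hUx).of_le (WithTop.coe_le_coe.mpr le_top)
  have s1 := pd_comm c2β₂ 1 0
  have s2 := pd_comm c2β₃ 2 0
  have s3 := pd_comm c2β₃ 2 1
  have s4 := pd_comm c2β₂ 1 2
  rw [hw0, hw1, hw2]
  linear_combination hF0 + hG0 - s1 - s2 - β₂ x * s3 - β₃ x * s4
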